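/- arXiv:1005.0825 — 8 statements merged into one kernel-verified Lean document; each statement's English description precedes it below -/
import Mathlib

section
/- For a needle of length ℓ thrown at random onto a plane ruled with parallel lines at distance d apart, with ℓ ≤ d, if the distance X from the needle's midpoint to the nearest line is uniformly distributed on [0, d/2] and the acute angle Θ between the needle and the lines is uniformly distributed on [0, π/2], independently, then the probability that the needle crosses a line equals 2ℓ/(πd). -/
open MeasureTheory Set

/-!
Integrating out the position first, for a fixed angle `θ` the needle crosses exactly when
`X ∈ [0, (ℓ/2) sin θ]`, an interval inside `[0, d/2]` because `ℓ ≤ d`. So the unnormalised crossing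
area is `∫₀^{π/2} (ℓ/2) sin θ dθ = ℓ/2`, and the normalising densities `2/d` and `2/π` turn it
into `2ℓ/(πd)`.
-/

lemma restrict_Icc_zero_apply_Iic {a c : ℝ} (hca : c ≤ a) :
    volume.restrict (Icc 0 a) (Iic c) = ENNReal.ofReal c := by
  have hinter : Iic c ∩ Icc 0 a = Icc 0 c :=
    Set.ext fun _ ↦ ⟨fun h ↦ ⟨h.2.1, h.1⟩, fun h ↦ ⟨h.2, h.1, h.2.trans hca⟩⟩
  rw [Measure.restrict_apply measurableSet_Iic, hinter, Real.volume_Icc, sub_zero]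

lemma restrict_Icc_zero_prod_setOf_fst_le {a : ℝ} {f : ℝ → ℝ} (hf : Measurable f)
    {ν : Measure ℝ} [SFinite ν] {s : Set ℝ} (hs : MeasurableSet s)
    (hf_le : ∀ θ ∈ s, f θ ≤ a) :
    ((volume.restrict (Icc 0 a)).prod (ν.restrict s)) {p | p.1 ≤ f p.2}
      = ∫⁻ θ in s, ENNReal.ofReal (f θ) ∂ν := by
  rw [Measure.prod_apply_symm (measurableSet_le measurable_fst (hf.comp measurable_snd) :
    MeasurableSet {p : ℝ × ℝ | p.1 ≤ f p.2})]
  exact setLIntegral_congr_fun hs fun θ hθ ↦ restrict_Icc_zero_apply_Iic (hf_le θ hθ)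

lemma lintegral_ofReal_sin_Icc_zero_pi_div_two :
    ∫⁻ θ in Icc 0 (Real.pi / 2), ENNReal.ofReal (Real.sin θ) = 1 := by
  have hsin : 0 ≤ᵐ[volume.restrict (Icc 0 (Real.pi / 2))] Real.sin := by
    filter_upwards [self_mem_ae_restrict measurableSet_Icc] with θ hθ
    exact Real.sin_nonneg_of_nonneg_of_le_pi hθ.1 (hθ.2.trans (by linarith [Real.pi_pos]))
  rw [← ofReal_integral_eq_lintegral_ofReal Real.continuous_sin.integrableOn_Icc hsin,
    integral_Icc_eq_integral_Ioc, ← intervalIntegral.integral_of_le (by positivity),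
    integral_sin]
  simp

theorem buffon_needle (ℓ d : ℝ) (hℓ : 0 < ℓ) (hld : ℓ ≤ d) :
    (((ENNReal.ofReal (2 / d)) • (volume.restrict (Icc (0:ℝ) (d / 2)))).prod
        ((ENNReal.ofReal (2 / Real.pi)) • (volume.restrict (Icc (0:ℝ) (Real.pi / 2)))))
      {p : ℝ × ℝ | p.1 ≤ ℓ / 2 * Real.sin p.2}
      = ENNReal.ofReal (2 * ℓ / (Real.pi * d)) := by
  have hd : 0 < d := hℓ.trans_le hld
  have hsection : ∀ θ ∈ Icc 0 (Real.pi / 2), ℓ / 2 * Real.sin θ ≤ d / 2 := fun θ _ ↦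
    by nlinarith [Real.sin_le_one θ]
  have harea : ((volume.restrict (Icc 0 (d / 2))).prod (volume.restrict (Icc 0 (Real.pi / 2))))
      {p : ℝ × ℝ | p.1 ≤ ℓ / 2 * Real.sin p.2} = ENNReal.ofReal (ℓ / 2) := by
    rw [restrict_Icc_zero_prod_setOf_fst_le (by fun_prop) measurableSet_Icc hsection]
    simp_rw [ENNReal.ofReal_mul (by positivity : 0 ≤ ℓ / 2)]
    rw [lintegral_const_mul' _ _ ENNReal.ofReal_ne_top, lintegral_ofReal_sin_Icc_zero_pi_div_two,
      mul_one]
  rw [Measure.prod_smul_left, Measure.prod_smul_right, Measure.smul_apply, Measure.smul_apply,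
    harea, smul_eq_mul, smul_eq_mul, ← ENNReal.ofReal_mul (by positivity),
    ← ENNReal.ofReal_mul (by positivity)]
  congr 1
  field_simp
end

section
/- Let f : [0,1] → ℝ be a continuous probability density on [0,1] (f ≥ 0, ∫₀¹ f = 1). For a positive integer n, partition [0,1] into 2n equal subintervals and let p_n be the total f-measure of the odd-indexed subintervals, i.e., p_n = ∑_{k=0}^{n-1} ∫_{2k/(2n)}^{(2k+1)/(2n)} f(x) dx. Then p_n → 1/2 as n → ∞. -/
open MeasureTheory Set

/-!
Pair each odd cell `[2k/2n, (2k+1)/2n]` with the even cell to its right. Translating by the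
mesh `1/2n` turns the difference of their masses into `∫ (f x - f (x + 1/2n))` over the odd cell,
so by uniform continuity the odd and even masses differ by at most `ε/2` once the mesh is small,
while together they make up `∫₀¹ f = 1`.
-/

theorem abs_integral_sub_integral_shift_le {f : ℝ → ℝ} {a h ε : ℝ} (hh : 0 ≤ h)
    (hf : IntervalIntegrable f volume a (a + 2 * h))
    (hε : ∀ x ∈ Icc a (a + h), |f x - f (x + h)| ≤ ε) :
    |(∫ x in a..a + h, f x) - ∫ x in a + h..a + 2 * h, f x| ≤ ε * h := by
  have hleft : IntervalIntegrable f volume a (a + h) :=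
    hf.mono_set (uIcc_subset_uIcc (mem_uIcc_of_le le_rfl (by linarith))
      (mem_uIcc_of_le (by linarith) (by linarith)))
  have hshift : IntervalIntegrable (fun x => f (x + h)) volume a (a + h) := by
    have := (hf.mono_set (uIcc_subset_uIcc
      (mem_uIcc_of_le (by linarith : a ≤ a + h) (by linarith))
      (mem_uIcc_of_le (by linarith) le_rfl))).comp_add_right h
    rwa [add_sub_cancel_right, show a + 2 * h - h = a + h by ring] at this
  have htranslate : ∫ x in a + h..a + 2 * h, f x = ∫ x in a..a + h, f (x + h) := by
    rw [intervalIntegral.integral_comp_add_right]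
    ring_nf
  rw [htranslate, ← intervalIntegral.integral_sub hleft hshift]
  calc |∫ x in a..a + h, f x - f (x + h)| ≤ ε * |a + h - a| :=
        intervalIntegral.norm_integral_le_of_norm_le_const (f := fun x => f x - f (x + h))
          fun x hx => hε x (Ioc_subset_Icc_self (uIoc_of_le (by linarith : a ≤ a + h) ▸ hx))
    _ = ε * h := by rw [add_sub_cancel_left, abs_of_nonneg hh]

theorem sum_integral_odd_add_even {f : ℝ → ℝ} {d : ℝ} (hd : 0 < d) (n : ℕ)
    (hf : IntervalIntegrable f volume 0 (2 * n / d)) :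
    ∑ k ∈ Finset.range n, ((∫ x in 2 * (k : ℝ) / d..(2 * k + 1) / d, f x) +
      ∫ x in (2 * (k : ℝ) + 1) / d..(2 * k + 2) / d, f x) = ∫ x in 0..2 * n / d, f x := by
  have hint : ∀ r s : ℝ, 0 ≤ r → 0 ≤ s → r ≤ 2 * n → s ≤ 2 * n →
      IntervalIntegrable f volume (r / d) (s / d) := by
    intro r s hr0 hs0 hrn hsn
    refine hf.mono_set (uIcc_subset_uIcc ?_ ?_) <;>
      exact mem_uIcc_of_le (by positivity) (div_le_div_of_nonneg_right ‹_› hd.le)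
  have hk : ∀ k ∈ Finset.range n, 2 * (k : ℝ) + 2 ≤ 2 * n := fun k hk => by
    have : (k : ℝ) + 1 ≤ n := by exact_mod_cast Finset.mem_range.mp hk
    linarith
  calc _ = ∑ k ∈ Finset.range n,
        ∫ x in 2 * (k : ℝ) / d..2 * ((k + 1 : ℕ) : ℝ) / d, f x :=
        Finset.sum_congr rfl fun k hkn => by
          have := hk k hkn
          rw [intervalIntegral.integral_add_adjacent_intervals
            (hint _ _ (by positivity) (by positivity) (by linarith) (by linarith))
            (hint _ _ (by positivity) (by positivity) (by linarith) (by linarith))]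
          push_cast
          ring_nf
    _ = ∫ x in 0..2 * n / d, f x := by
        rw [intervalIntegral.sum_integral_adjacent_intervals
          (a := fun k : ℕ => 2 * (k : ℝ) / d)]
        · simp
        · intro k hkn
          have := hk k (Finset.mem_range.mpr hkn)
          push_cast
          exact hint _ _ (by positivity) (by positivity) (by linarith) (by linarith)

theorem abs_sum_integral_odd_sub_even_le {f : ℝ → ℝ} {d ε : ℝ} {n : ℕ} (hd : 0 < d)
    (hn : 2 * n ≤ d) (hf : IntervalIntegrable f volume 0 1)
    (hε : ∀ x ∈ Icc (0 : ℝ) 1, ∀ y ∈ Icc (0 : ℝ) 1,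
      |x - y| ≤ 1 / d → |f x - f y| ≤ ε) :
    |∑ k ∈ Finset.range n, ((∫ x in 2 * (k : ℝ) / d..(2 * k + 1) / d, f x) -
      ∫ x in (2 * (k : ℝ) + 1) / d..(2 * k + 2) / d, f x)| ≤ n * (ε / d) := by
  calc _ ≤ ∑ k ∈ Finset.range n, |(∫ x in 2 * (k : ℝ) / d..(2 * k + 1) / d, f x) -
        ∫ x in (2 * (k : ℝ) + 1) / d..(2 * k + 2) / d, f x| := Finset.abs_sum_le_sum_abs _ _
    _ ≤ ∑ _k ∈ Finset.range n, ε * (1 / d) := Finset.sum_le_sum fun k hkn => by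
        have hkn : (k : ℝ) + 1 ≤ n := by exact_mod_cast Finset.mem_range.mp hkn
        have hstep : 0 ≤ 1 / d := by positivity
        have hstart : 0 ≤ 2 * (k : ℝ) / d := by positivity
        have hend : 2 * (k : ℝ) / d + 2 * (1 / d) ≤ 1 := by
          rw [show 2 * (k : ℝ) / d + 2 * (1 / d) = (2 * k + 2) / d by ring, div_le_one hd]
          linarith
        rw [show (2 * (k : ℝ) + 1) / d = 2 * k / d + 1 / d by ring,
          show (2 * (k : ℝ) + 2) / d = 2 * k / d + 2 * (1 / d) by ring]
        refine abs_integral_sub_integral_shift_le hstep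
          (hf.mono_set (uIcc_subset_uIcc (mem_uIcc_of_le hstart (by linarith))
            (mem_uIcc_of_le (by linarith) hend))) fun x hx => hε x ?_ (x + 1 / d) ?_ ?_
        · exact ⟨by linarith [hx.1], by linarith [hx.2]⟩
        · exact ⟨by linarith [hx.1], by linarith [hx.2]⟩
        · rw [sub_add_cancel_left, abs_neg, abs_of_nonneg hstep]
    _ = n * (ε / d) := by
        rw [Finset.sum_const, Finset.card_range, nsmul_eq_mul]
        ring

theorem abs_sum_integral_odd_sub_half_le {f : ℝ → ℝ} {ε : ℝ} {n : ℕ} (hn : 0 < n)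
    (hf : IntervalIntegrable f volume 0 1) (hf_int : ∫ x in (0 : ℝ)..1, f x = 1)
    (hε : ∀ x ∈ Icc (0 : ℝ) 1, ∀ y ∈ Icc (0 : ℝ) 1,
      |x - y| ≤ 1 / (2 * n) → |f x - f y| ≤ ε) :
    |∑ k ∈ Finset.range n, (∫ x in 2 * (k : ℝ) / (2 * n)..(2 * k + 1) / (2 * n), f x) -
      1 / 2| ≤ ε / 4 := by
  have h2n : (0 : ℝ) < 2 * n := by positivity
  have htot := sum_integral_odd_add_even h2n n (by rwa [div_self h2n.ne'])
  have hdiff := abs_sum_integral_odd_sub_even_le h2n le_rfl hf hε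
  rw [div_self h2n.ne', hf_int, Finset.sum_add_distrib] at htot
  rw [Finset.sum_sub_distrib, abs_le,
    show (n : ℝ) * (ε / (2 * n)) = ε / 2 by field_simp] at hdiff
  rw [abs_le]
  constructor <;> linarith [hdiff.1, hdiff.2]

theorem arbitrary_functions_half_general (f : ℝ → ℝ)
    (hf_cont : ContinuousOn f (Set.Icc 0 1))
    (hf_int : ∫ x in (0:ℝ)..1, f x = 1) :
    Filter.Tendsto (fun n : ℕ =>
        ∑ k ∈ Finset.range n,
          ∫ x in ((2 * (k:ℝ)) / (2 * (n:ℝ)))..((2 * (k:ℝ) + 1) / (2 * (n:ℝ))), f x)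
      Filter.atTop (nhds (1 / 2)) := by
  have hf : IntervalIntegrable f volume 0 1 :=
    (hf_cont.mono (uIcc_of_le zero_le_one).subset).intervalIntegrable
  rw [Metric.tendsto_atTop]
  intro ε hε
  obtain ⟨δ, hδ, hfδ⟩ := Metric.uniformContinuousOn_iff.mp
    (isCompact_Icc.uniformContinuousOn_of_continuous hf_cont) ε hε
  obtain ⟨N, hN⟩ := exists_nat_one_div_lt hδ
  refine ⟨N + 1, fun n hNn => ?_⟩
  have hmesh : 1 / (2 * (n : ℝ)) < δ := by
    refine lt_of_le_of_lt (one_div_le_one_div_of_le (by positivity) ?_) hN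
    have : (N : ℝ) + 1 ≤ n := by exact_mod_cast hNn
    linarith
  rw [Real.dist_eq]
  refine (abs_sum_integral_odd_sub_half_le (by omega) hf hf_int
    fun x hx y hy hxy => (hfδ x hx y hy (hxy.trans_lt hmesh)).le).trans_lt ?_
  linarith

theorem arbitrary_functions_half (f : ℝ → ℝ)
    (hf_cont : ContinuousOn f (Set.Icc 0 1))
    (hf_nonneg : ∀ x ∈ Set.Icc (0:ℝ) 1, 0 ≤ f x)
    (hf_int : ∫ x in (0:ℝ)..1, f x = 1) :
    Filter.Tendsto (fun n : ℕ =>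
        ∑ k ∈ Finset.range n,
          ∫ x in ((2 * (k:ℝ)) / (2 * (n:ℝ)))..((2 * (k:ℝ) + 1) / (2 * (n:ℝ))), f x)
      Filter.atTop (nhds (1 / 2)) :=
  arbitrary_functions_half_general f hf_cont hf_int
end

section
/- Let f : ℝ → ℝ be a continuous, nonnegative, integrable function with ∫ f = 1, and fix a period T > 0 and a measurable set A ⊆ [0, T). For λ > 0, let P(λ) = μ_f({x : λ x mod T ∈ A}), where μ_f is the measure with density f. Then P(λ) → |A|/T as λ → ∞, where |A| is the Lebesgue measure of A. -/
open MeasureTheory Filter intervalIntegral Topology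

lemma my_intervalIntegrable_of_bdd {h : ℝ → ℝ} {M : ℝ} (hm : Measurable h)
    (hb : ∀ x, |h x| ≤ M) (a b : ℝ) : IntervalIntegrable h volume a b := by
  rw [intervalIntegrable_iff]
  refine Integrable.mono' (g := fun _ => M) ?_ hm.aestronglyMeasurable (ae_of_all _ ?_)
  · exact integrableOn_const measure_Ioc_lt_top.ne
  · intro x; simpa [Real.norm_eq_abs] using hb x

lemma my_intervalIntegrable_mul_bdd {f h : ℝ → ℝ} (hf : Continuous f) (hm : Measurable h)
    {M : ℝ} (hM : ∀ x, |h x| ≤ M) (u v : ℝ) :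
    IntervalIntegrable (fun x => f x * h x) volume u v := by
  rw [intervalIntegrable_iff]
  have hfi : IntegrableOn f (Set.uIoc u v) volume := by
    rw [← intervalIntegrable_iff]; exact hf.intervalIntegrable u v
  have := hfi.bdd_mul (f := h) (hm.aestronglyMeasurable.restrict)
    (ae_of_all _ fun x => by simpa [Real.norm_eq_abs] using hM x)
  exact this.congr (ae_of_all _ fun x => mul_comm _ _)

lemma my_osc_small {h : ℝ → ℝ} {M C : ℝ} (hm : Measurable h)
    (hM : ∀ x, |h x| ≤ M)
    (hC : ∀ u v : ℝ, |∫ t in u..v, h t| ≤ C)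
    {f : ℝ → ℝ} (hf : Continuous f) (a b : ℝ) (hab : a ≤ b) :
    Tendsto (fun lam : ℝ => ∫ x in a..b, f x * h (lam * x)) atTop (𝓝 0) := by
  have hM0 : 0 ≤ M := (abs_nonneg _).trans (hM 0)
  have hC0 : 0 ≤ C := (abs_nonneg _).trans (hC 0 0)
  obtain ⟨Mf, hMf⟩ := (isCompact_Icc (a := a) (b := b)).exists_bound_of_continuousOn
    hf.continuousOn
  have hMf0 : 0 ≤ Mf := (norm_nonneg _).trans (hMf a ⟨le_refl a, hab⟩)
  rw [NormedAddCommGroup.tendsto_nhds_zero]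
  intro ε hε
  set ε₁ : ℝ := ε / (4 * (M + 1) * (b - a + 1)) with hε₁def
  have hε₁ : 0 < ε₁ := by
    apply div_pos hε; nlinarith
  -- uniform continuity
  have huc : UniformContinuousOn f (Set.Icc a b) :=
    isCompact_Icc.uniformContinuousOn_of_continuous hf.continuousOn
  rw [Metric.uniformContinuousOn_iff] at huc
  obtain ⟨δ, hδ, hδf⟩ := huc ε₁ hε₁
  set n : ℕ := ⌈(b - a) / δ⌉₊ + 1 with hndef
  have hn0 : 0 < n := Nat.succ_pos _
  have hnR : (0:ℝ) < n := by exact_mod_cast hn0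
  set Δ : ℝ := (b - a) / n with hΔdef
  have hΔ0 : 0 ≤ Δ := div_nonneg (by linarith) hnR.le
  have hΔδ : Δ < δ := by
    have h1 : (b - a) / δ < n := by
      calc (b - a) / δ ≤ (⌈(b - a) / δ⌉₊ : ℝ) := Nat.le_ceil _
      _ < n := by exact_mod_cast Nat.lt_succ_self _
    rw [hΔdef, div_lt_iff₀ hnR]
    rw [div_lt_iff₀ hδ] at h1
    linarith [h1]
  set t : ℕ → ℝ := fun i => a + i * Δ with htdef
  have ht0 : t 0 = a := by simp [htdef]
  have htn : t n = b := by
    simp only [htdef, hΔdef]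
    field_simp
    ring
  have htmem : ∀ i : ℕ, i ≤ n → t i ∈ Set.Icc a b := by
    intro i hi
    constructor
    · simp only [htdef]; nlinarith [hΔ0, Nat.cast_nonneg (α := ℝ) i]
    · have : (i : ℝ) * Δ ≤ n * Δ := by
        apply mul_le_mul_of_nonneg_right _ hΔ0; exact_mod_cast hi
      have hnΔ : (n : ℝ) * Δ = b - a := by
        rw [hΔdef]; field_simp
      simp only [htdef]; linarith
  filter_upwards [eventually_ge_atTop (1:ℝ),
    eventually_ge_atTop ((4:ℝ) * n * (Mf + 1) * (C + 1) / ε)] with lam hlam1 hlam2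
  have hlam0 : 0 < lam := lt_of_lt_of_le one_pos hlam1
  have hint : ∀ u v : ℝ, IntervalIntegrable (fun x => f x * h (lam * x)) volume u v := by
    intro u v
    exact my_intervalIntegrable_mul_bdd hf ((hm.comp (measurable_id.const_mul lam)))
      (fun x => hM _) u v
  have hinth : ∀ u v : ℝ, IntervalIntegrable (fun x => h (lam * x)) volume u v := by
    intro u v
    exact my_intervalIntegrable_of_bdd ((hm.comp (measurable_id.const_mul lam)))
      (fun x => hM _) u v
  have hsum : ∫ x in a..b, f x * h (lam * x) =
      ∑ i ∈ Finset.range n, ∫ x in t i..t (i+1), f x * h (lam * x) := by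
    rw [intervalIntegral.sum_integral_adjacent_intervals (fun k _ => hint _ _), ht0, htn]
  -- bound each piece
  have hpiece : ∀ i ∈ Finset.range n,
      ‖∫ x in t i..t (i+1), f x * h (lam * x)‖ ≤ ε₁ * M * Δ + Mf * (C / lam) := by
    intro i hi
    rw [Finset.mem_range] at hi
    have hti : t i ∈ Set.Icc a b := htmem i hi.le
    have hti1 : t (i+1) ∈ Set.Icc a b := htmem (i+1) hi
    have htle : t i ≤ t (i+1) := by
      simp only [htdef]; push_cast; nlinarith [hΔ0]
    have hdiff : t (i+1) - t i = Δ := by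
      simp only [htdef]; push_cast; ring
    have hdecomp : ∫ x in t i..t (i+1), f x * h (lam * x) =
        (∫ x in t i..t (i+1), (f x - f (t i)) * h (lam * x))
          + f (t i) * ∫ x in t i..t (i+1), h (lam * x) := by
      have h1 : ∀ x : ℝ, (f x - f (t i)) * h (lam * x)
          = f x * h (lam * x) - f (t i) * h (lam * x) := fun x => by ring
      simp only [h1]
      rw [intervalIntegral.integral_sub (hint _ _) ((hinth _ _).const_mul _),
        intervalIntegral.integral_const_mul]
      ring
    have hb1 : ‖∫ x in t i..t (i+1), (f x - f (t i)) * h (lam * x)‖ ≤ (ε₁ * M) * Δ := by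
      have := intervalIntegral.norm_integral_le_of_norm_le_const
        (a := t i) (b := t (i+1)) (C := ε₁ * M)
        (f := fun x => (f x - f (t i)) * h (lam * x)) ?_
      · calc _ ≤ ε₁ * M * |t (i+1) - t i| := this
          _ = (ε₁ * M) * Δ := by rw [hdiff, abs_of_nonneg hΔ0]
      · intro x hx
        rw [Set.uIoc_of_le htle] at hx
        have hxI : x ∈ Set.Icc a b := ⟨hti.1.trans hx.1.le, hx.2.trans hti1.2⟩
        have hdist : dist x (t i) < δ := by
          rw [Real.dist_eq, abs_of_nonneg (by linarith [hx.1.le] : (0:ℝ) ≤ x - t i)]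
          have : x - t i ≤ Δ := by linarith [hx.2, hdiff]
          linarith
        have hfd : |f x - f (t i)| ≤ ε₁ := by
          have := hδf x hxI (t i) ⟨hti.1, hti.2⟩ hdist
          rw [Real.dist_eq] at this; linarith
        rw [Real.norm_eq_abs, abs_mul]
        exact mul_le_mul hfd (hM _) (abs_nonneg _) hε₁.le
    have hb2 : ‖f (t i) * ∫ x in t i..t (i+1), h (lam * x)‖ ≤ Mf * (C / lam) := by
      rw [Real.norm_eq_abs, abs_mul]
      apply mul_le_mul (by simpa using hMf _ hti) ?_ (abs_nonneg _) hMf0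
      rw [intervalIntegral.integral_comp_mul_left _ hlam0.ne']
      rw [smul_eq_mul, abs_mul, abs_inv, abs_of_nonneg hlam0.le]
      rw [div_eq_inv_mul]
      exact mul_le_mul_of_nonneg_left (hC _ _) (by positivity)
    calc ‖∫ x in t i..t (i+1), f x * h (lam * x)‖
        ≤ ‖∫ x in t i..t (i+1), (f x - f (t i)) * h (lam * x)‖
          + ‖f (t i) * ∫ x in t i..t (i+1), h (lam * x)‖ := by
            rw [hdecomp]; exact norm_add_le _ _
      _ ≤ (ε₁ * M) * Δ + Mf * (C / lam) := add_le_add hb1 hb2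
  -- sum up
  have htotal : ‖∫ x in a..b, f x * h (lam * x)‖ ≤ n * ((ε₁ * M) * Δ + Mf * (C / lam)) := by
    rw [hsum]
    calc ‖∑ i ∈ Finset.range n, ∫ x in t i..t (i+1), f x * h (lam * x)‖
        ≤ ∑ i ∈ Finset.range n, ‖∫ x in t i..t (i+1), f x * h (lam * x)‖ :=
          norm_sum_le _ _
      _ ≤ ∑ _i ∈ Finset.range n, ((ε₁ * M) * Δ + Mf * (C / lam)) :=
          Finset.sum_le_sum hpiece
      _ = n * ((ε₁ * M) * Δ + Mf * (C / lam)) := by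
          rw [Finset.sum_const, Finset.card_range, nsmul_eq_mul]
  have hterm1 : (n:ℝ) * ((ε₁ * M) * Δ) ≤ ε / 4 := by
    have hnΔ : (n : ℝ) * Δ = b - a := by rw [hΔdef]; field_simp
    have : (n:ℝ) * ((ε₁ * M) * Δ) = ε₁ * M * (b - a) := by
      rw [← hnΔ]; ring
    rw [this, hε₁def]
    rw [div_mul_eq_mul_div, div_mul_eq_mul_div, div_le_iff₀ (by nlinarith)]
    nlinarith [hε.le, hM0, hab]
  have hterm2 : (n:ℝ) * (Mf * (C / lam)) ≤ ε / 4 := by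
    rw [mul_div_assoc', mul_div_assoc', div_le_iff₀ hlam0]
    have h2 : (4:ℝ) * n * (Mf + 1) * (C + 1) / ε * ε ≤ lam * ε :=
      mul_le_mul_of_nonneg_right hlam2 hε.le
    rw [div_mul_cancel₀ _ hε.ne'] at h2
    nlinarith [hnR, hMf0, hC0, hε.le]
  calc ‖∫ x in a..b, f x * h (lam * x)‖
      ≤ n * ((ε₁ * M) * Δ + Mf * (C / lam)) := htotal
    _ = n * ((ε₁ * M) * Δ) + n * (Mf * (C / lam)) := by ring
    _ ≤ ε / 4 + ε / 4 := add_le_add hterm1 hterm2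
    _ < ε := by linarith

lemma my_bounded_primitive {h : ℝ → ℝ} {T : ℝ} (hT : 0 < T) (hm : Measurable h)
    (hb : ∀ x, |h x| ≤ 1) (hper : Function.Periodic h T)
    (hzero : (∫ t in (0:ℝ)..T, h t) = 0) :
    ∀ u v : ℝ, |∫ t in u..v, h t| ≤ 2 * T := by
  have hint : ∀ u v : ℝ, IntervalIntegrable h volume u v :=
    my_intervalIntegrable_of_bdd hm hb
  set H : ℝ → ℝ := fun x => ∫ t in (0:ℝ)..x, h t with hHdef
  have hperH : Function.Periodic H T := by
    intro x
    have h1 : H x + ∫ t in x..(x+T), h t = H (x + T) :=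
      intervalIntegral.integral_add_adjacent_intervals (hint 0 x) (hint x (x+T))
    have h2 : (∫ t in x..(x+T), h t) = ∫ t in (0:ℝ)..(0+T), h t :=
      hper.intervalIntegral_add_eq x 0
    rw [h2, zero_add, hzero, add_zero] at h1
    exact h1.symm
  have hHbdd : ∀ x, |H x| ≤ T := by
    intro x
    have hr : H x = H (x - (⌊x / T⌋ : ℤ) * T) := (hperH.sub_int_mul_eq ⌊x / T⌋).symm
    set r : ℝ := x - (⌊x / T⌋ : ℤ) * T with hrdef
    have hr0 : 0 ≤ r := by
      have h5 : (⌊x / T⌋ : ℝ) * T ≤ x / T * T :=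
        mul_le_mul_of_nonneg_right (Int.floor_le (x / T)) hT.le
      rw [div_mul_cancel₀ _ hT.ne'] at h5
      simp only [hrdef]; linarith
    have hrT : r ≤ T := by
      have h5 := Int.lt_floor_add_one (x / T)
      rw [div_lt_iff₀ hT] at h5
      simp only [hrdef]; nlinarith
    rw [hr]
    have := intervalIntegral.norm_integral_le_of_norm_le_const
      (a := (0:ℝ)) (b := r) (C := 1) (f := h)
      (fun x _ => by simpa [Real.norm_eq_abs] using hb x)
    rw [Real.norm_eq_abs] at this
    calc |H r| ≤ 1 * |r - 0| := this
      _ ≤ T := by rw [sub_zero, one_mul, abs_of_nonneg hr0]; exact hrT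
  intro u v
  have h3 : H u + ∫ t in u..v, h t = H v :=
    intervalIntegral.integral_add_adjacent_intervals (hint 0 u) (hint u v)
  have h4 : (∫ t in u..v, h t) = H v - H u := by linarith
  rw [h4]
  calc |H v - H u| ≤ |H v| + |H u| := abs_sub _ _
    _ ≤ 2 * T := by linarith [hHbdd u, hHbdd v]

theorem poincare_arbitrary_functions_mod (f : ℝ → ℝ)
    (hf_cont : Continuous f) (hf_nonneg : ∀ x, 0 ≤ f x)
    (hf_int : Integrable f) (hf_one : ∫ x, f x = 1)
    (T : ℝ) (hT : 0 < T) (A : Set ℝ) (hA : MeasurableSet A) (hAT : A ⊆ Set.Ico 0 T) :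
    Filter.Tendsto
      (fun lam : ℝ => ∫ x in {x : ℝ | T * Int.fract (lam * x / T) ∈ A}, f x)
      Filter.atTop (nhds ((volume A).toReal / T)) := by
  set B : Set ℝ := {y : ℝ | T * Int.fract (y / T) ∈ A} with hBdef
  have hmB : Measurable fun y : ℝ => T * Int.fract (y / T) :=
    measurable_const.mul (measurable_fract.comp (measurable_id.div_const T))
  have hB : MeasurableSet B := hmB hA
  set c : ℝ := (volume A).toReal / T with hcdef
  have hvA : volume A ≤ ENNReal.ofReal T := by
    calc volume A ≤ volume (Set.Ico 0 T) := measure_mono hAT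
      _ = ENNReal.ofReal T := by rw [Real.volume_Ico, sub_zero]
  have hc0 : 0 ≤ c := div_nonneg ENNReal.toReal_nonneg hT.le
  have hc1 : c ≤ 1 := by
    rw [hcdef, div_le_one hT]
    calc (volume A).toReal ≤ (ENNReal.ofReal T).toReal :=
        ENNReal.toReal_mono ENNReal.ofReal_ne_top hvA
      _ = T := ENNReal.toReal_ofReal hT.le
  set φ : ℝ → ℝ := B.indicator fun _ => (1:ℝ) with hφdef
  have hφmeas : Measurable φ := measurable_const.indicator hB
  set h : ℝ → ℝ := fun y => φ y - c with hhdef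
  have hhm : Measurable h := hφmeas.sub measurable_const
  have hφ01 : ∀ y, φ y = 0 ∨ φ y = 1 := fun y => by
    by_cases hy : y ∈ B <;> simp [hφdef, hy]
  have hφb : ∀ y, |φ y| ≤ 1 := fun y => by
    rcases hφ01 y with h0 | h0 <;> simp [h0]
  have hhb : ∀ y, |h y| ≤ 1 := by
    intro y
    rcases hφ01 y with h0 | h0 <;>
      (rw [abs_le]; constructor <;> simp only [hhdef, h0] <;> linarith)
  have hBper : ∀ y : ℝ, (y + T ∈ B ↔ y ∈ B) := by
    intro y
    have hdiv : (y + T) / T = y / T + 1 := by field_simp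
    simp only [hBdef, Set.mem_setOf_eq, hdiv, Int.fract_add_one]
  have hφper : Function.Periodic φ T := by
    intro y
    by_cases hy : y ∈ B
    · rw [hφdef, Set.indicator_of_mem ((hBper y).2 hy), Set.indicator_of_mem hy]
    · rw [hφdef, Set.indicator_of_notMem (fun hc => hy ((hBper y).1 hc)),
        Set.indicator_of_notMem hy]
  have hhper : Function.Periodic h T := by
    intro y; simp only [hhdef, hφper y]
  have hmuldiv : ∀ y : ℝ, T * (y / T) = y := fun y => by field_simp
  have hBIco : B ∩ Set.Ico 0 T = A := by
    ext y
    constructor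
    · rintro ⟨hyB, hy0, hyT⟩
      have hfr : Int.fract (y / T) = y / T :=
        Int.fract_eq_self.2 ⟨div_nonneg hy0 hT.le, (div_lt_one hT).2 hyT⟩
      have : T * Int.fract (y / T) ∈ A := hyB
      rwa [hfr, hmuldiv] at this
    · intro hyA
      have hy := hAT hyA
      have hfr : Int.fract (y / T) = y / T :=
        Int.fract_eq_self.2 ⟨div_nonneg hy.1 hT.le, (div_lt_one hT).2 hy.2⟩
      refine ⟨?_, hy⟩
      show T * Int.fract (y / T) ∈ A
      rwa [hfr, hmuldiv]
  have hmeasIoc : volume (B ∩ Set.Ioc 0 T) = volume A := by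
    have h1 : (B ∩ Set.Ioc 0 T : Set ℝ) =ᵐ[volume] (B ∩ Set.Ico 0 T : Set ℝ) :=
      (Filter.EventuallyEq.refl _ _).inter (MeasureTheory.Ico_ae_eq_Ioc).symm
    rw [measure_congr h1, hBIco]
  have hφintegr : IntervalIntegrable φ volume 0 T :=
    my_intervalIntegrable_of_bdd hφmeas hφb 0 T
  have hφint : (∫ t in (0:ℝ)..T, φ t) = (volume A).toReal := by
    rw [intervalIntegral.integral_of_le hT.le]
    simp only [hφdef]
    rw [MeasureTheory.setIntegral_indicator hB, MeasureTheory.setIntegral_const,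
      smul_eq_mul, mul_one, Set.inter_comm, measureReal_def, hmeasIoc]
  have hhzero : (∫ t in (0:ℝ)..T, h t) = 0 := by
    simp only [hhdef]
    rw [intervalIntegral.integral_sub hφintegr intervalIntegrable_const,
      hφint, intervalIntegral.integral_const, smul_eq_mul, hcdef]
    field_simp
    ring
  have hC := my_bounded_primitive hT hhm hhb hhper hhzero
  have hint1 : ∀ lam : ℝ, Integrable (fun x => f x * h (lam * x)) volume := by
    intro lam
    have hmeas : AEStronglyMeasurable (fun x => h (lam * x)) volume :=
      (hhm.comp (measurable_id.const_mul lam)).aestronglyMeasurable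
    have := hf_int.bdd_mul hmeas (ae_of_all _ fun x => by
      simpa [Real.norm_eq_abs] using hhb (lam * x))
    exact this.congr (ae_of_all _ fun x => mul_comm _ _)
  have eq1 : ∀ lam : ℝ, (∫ x in {x : ℝ | T * Int.fract (lam * x / T) ∈ A}, f x)
      = (∫ x, f x * h (lam * x)) + c := by
    intro lam
    have hSmeas : MeasurableSet {x : ℝ | T * Int.fract (lam * x / T) ∈ A} := by
      have hSeq : {x : ℝ | T * Int.fract (lam * x / T) ∈ A} = (fun x : ℝ => lam * x) ⁻¹' B := rfl
      rw [hSeq]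
      exact (measurable_id.const_mul lam) hB
    rw [← MeasureTheory.integral_indicator hSmeas]
    have hptw : ∀ x : ℝ, Set.indicator {x : ℝ | T * Int.fract (lam * x / T) ∈ A} f x
        = f x * h (lam * x) + c * f x := by
      intro x
      by_cases hx : T * Int.fract (lam * x / T) ∈ A
      · rw [Set.indicator_of_mem
          (show x ∈ {x : ℝ | T * Int.fract (lam * x / T) ∈ A} from hx) f]
        have hφ1 : φ (lam * x) = 1 :=
          Set.indicator_of_mem (show lam * x ∈ B from hx) _
        simp only [hhdef]; rw [hφ1]; ring
      · rw [Set.indicator_of_notMem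
          (show x ∉ {x : ℝ | T * Int.fract (lam * x / T) ∈ A} from hx) f]
        have hφ0 : φ (lam * x) = 0 :=
          Set.indicator_of_notMem (show lam * x ∉ B from hx) _
        simp only [hhdef]; rw [hφ0]; ring
    calc ∫ x, Set.indicator {x : ℝ | T * Int.fract (lam * x / T) ∈ A} f x
        = ∫ x, (f x * h (lam * x) + c * f x) := by
          congr 1; funext x; exact hptw x
      _ = (∫ x, f x * h (lam * x)) + c * ∫ x, f x := by
          rw [MeasureTheory.integral_add (hint1 lam) (hf_int.const_mul c),
            MeasureTheory.integral_const_mul]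
      _ = (∫ x, f x * h (lam * x)) + c := by rw [hf_one, mul_one]
  have key : Tendsto (fun lam : ℝ => ∫ x, f x * h (lam * x)) atTop (𝓝 0) := by
    rw [NormedAddCommGroup.tendsto_nhds_zero]
    intro ε hε
    have htail : Tendsto (fun R : ℝ => ∫ x in (-R)..R, |f x|) atTop (𝓝 (∫ x, |f x|)) :=
      MeasureTheory.intervalIntegral_tendsto_integral hf_int.abs tendsto_neg_atTop_atBot
        tendsto_id
    obtain ⟨N, hN⟩ := Metric.tendsto_atTop.mp htail (ε/3) (by linarith)
    set R : ℝ := max N 1 with hRdef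
    have hR1 : (1:ℝ) ≤ R := le_max_right _ _
    have hRtail : dist (∫ x in (-R)..R, |f x|) (∫ x, |f x|) < ε/3 :=
      hN R (le_max_left _ _)
    have hRR : -R ≤ R := by linarith
    have hIoc : MeasurableSet (Set.Ioc (-R) R) := measurableSet_Ioc
    have hcompl : ∫ x in (Set.Ioc (-R) R)ᶜ, |f x| ≤ ε/3 := by
      have hsplit := MeasureTheory.integral_add_compl hIoc hf_int.abs
      have h0 : (∫ x in Set.Ioc (-R) R, |f x|) = ∫ x in (-R)..R, |f x| :=
        (intervalIntegral.integral_of_le hRR).symm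
      rw [Real.dist_eq] at hRtail
      have habs := abs_le.mp hRtail.le
      linarith [habs.1, habs.2]
    have hosc := my_osc_small hhm hhb hC hf_cont (-R) R hRR
    rw [NormedAddCommGroup.tendsto_nhds_zero] at hosc
    filter_upwards [hosc (ε/3) (by linarith)] with lam hlam
    rw [← MeasureTheory.integral_add_compl hIoc (hint1 lam)]
    have h1 : ‖∫ x in Set.Ioc (-R) R, f x * h (lam * x)‖ < ε/3 := by
      rw [show (∫ x in Set.Ioc (-R) R, f x * h (lam * x))
          = ∫ x in (-R)..R, f x * h (lam * x) from (intervalIntegral.integral_of_le hRR).symm]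
      exact hlam
    have h2 : ‖∫ x in (Set.Ioc (-R) R)ᶜ, f x * h (lam * x)‖ ≤ ε/3 := by
      calc ‖∫ x in (Set.Ioc (-R) R)ᶜ, f x * h (lam * x)‖
          ≤ ∫ x in (Set.Ioc (-R) R)ᶜ, ‖f x * h (lam * x)‖ :=
            norm_integral_le_integral_norm _
        _ ≤ ∫ x in (Set.Ioc (-R) R)ᶜ, |f x| := by
            apply setIntegral_mono_on ((hint1 lam).norm.integrableOn)
              (hf_int.abs.integrableOn) hIoc.compl
            intro x _
            rw [norm_mul, Real.norm_eq_abs, Real.norm_eq_abs]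
            calc |f x| * |h (lam * x)| ≤ |f x| * 1 :=
                mul_le_mul_of_nonneg_left (hhb _) (abs_nonneg _)
              _ = |f x| := mul_one _
        _ ≤ ε/3 := hcompl
    calc ‖(∫ x in Set.Ioc (-R) R, f x * h (lam * x))
          + ∫ x in (Set.Ioc (-R) R)ᶜ, f x * h (lam * x)‖
        ≤ ‖∫ x in Set.Ioc (-R) R, f x * h (lam * x)‖
          + ‖∫ x in (Set.Ioc (-R) R)ᶜ, f x * h (lam * x)‖ := norm_add_le _ _
      _ < ε := by linarith
  have hfin := key.add_const c
  rw [zero_add] at hfin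
  exact Filter.Tendsto.congr (fun lam => (eq1 lam).symm) hfin
end

section
/- Let P be an N×N stochastic matrix (all entries nonnegative, each row summing to 1) with all entries strictly positive, and let δ = min over i,j of P i j. Then for any two probability vectors μ and ν on {1,…,N}, the total variation distance between μP and νP satisfies ‖μP − νP‖₁ ≤ (1 − Nδ)·‖μ − ν‖₁ (when Nδ ≤ 1). -/
/-!
Since `μ - ν` has total mass zero, subtracting the constant `δ` from every entry of `P` does not
change `(μ - ν) P`. The matrix `P - δ` is entrywise nonnegative with row sums `1 - N δ`, and a
nonnegative matrix multiplies the `ℓ¹` norm of a row vector by at most its largest row sum.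
-/

open Finset

section
variable {ι κ R : Type*} [Fintype ι] [Fintype κ]

lemma sum_mul_sub_const_of_sum_eq_zero [CommRing R] {d : ι → R} (hd : ∑ i, d i = 0)
    (q : ι → R) (c : R) : ∑ i, d i * (q i - c) = ∑ i, d i * q i := by
  simp only [mul_sub, sum_sub_distrib, ← sum_mul, hd, zero_mul, sub_zero]

lemma sum_abs_sum_mul_le [CommRing R] [LinearOrder R] [IsStrictOrderedRing R] (d : ι → R)
    {Q : ι → κ → R} (hQ : ∀ i j, 0 ≤ Q i j) :
    ∑ j, |∑ i, d i * Q i j| ≤ ∑ i, |d i| * ∑ j, Q i j :=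
  calc ∑ j, |∑ i, d i * Q i j|
      ≤ ∑ j, ∑ i, |d i| * Q i j := sum_le_sum fun j _ =>
        (abs_sum_le_sum_abs _ _).trans_eq <| sum_congr rfl fun i _ => by
          rw [abs_mul, abs_of_nonneg (hQ i j)]
    _ = ∑ i, |d i| * ∑ j, Q i j := by simp only [sum_comm (γ := ι), mul_sum]

end

theorem markov_l1_contraction_general (N : ℕ) (P : Matrix (Fin N) (Fin N) ℝ)
    (hrow : ∀ i, ∑ j, P i j = 1)
    (δ : ℝ) (hδ : IsLeast (Set.range fun p : Fin N × Fin N => P p.1 p.2) δ)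
    (μ ν : Fin N → ℝ) (hμ1 : ∑ i, μ i = 1)
    (hν1 : ∑ i, ν i = 1) :
    ∑ j, |(∑ i, μ i * P i j) - (∑ i, ν i * P i j)| ≤
      (1 - (N : ℝ) * δ) * ∑ i, |μ i - ν i| := by
  have hδP : ∀ i j, δ ≤ P i j := fun i j => hδ.2 ⟨(i, j), rfl⟩
  have hmass : ∑ i, (μ i - ν i) = 0 := by rw [sum_sub_distrib, hμ1, hν1, sub_self]
  calc ∑ j, |(∑ i, μ i * P i j) - (∑ i, ν i * P i j)|
      = ∑ j, |∑ i, (μ i - ν i) * (P i j - δ)| := sum_congr rfl fun j _ => by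
        rw [sum_mul_sub_const_of_sum_eq_zero hmass (P · j), ← sum_sub_distrib]
        simp only [sub_mul]
    _ ≤ ∑ i, |μ i - ν i| * ∑ j, (P i j - δ) :=
        sum_abs_sum_mul_le _ fun i j => sub_nonneg.2 (hδP i j)
    _ = (1 - N * δ) * ∑ i, |μ i - ν i| := by
        simp only [sum_sub_distrib, hrow, sum_const, card_univ, Fintype.card_fin, nsmul_eq_mul,
          mul_sum, mul_comm]

theorem markov_l1_contraction (N : ℕ) (P : Matrix (Fin N) (Fin N) ℝ)
    (hpos : ∀ i j, 0 < P i j) (hrow : ∀ i, ∑ j, P i j = 1)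
    (δ : ℝ) (hδ : IsLeast (Set.range fun p : Fin N × Fin N => P p.1 p.2) δ)
    (hNδ : (N : ℝ) * δ ≤ 1)
    (μ ν : Fin N → ℝ) (hμ0 : ∀ i, 0 ≤ μ i) (hμ1 : ∑ i, μ i = 1)
    (hν0 : ∀ i, 0 ≤ ν i) (hν1 : ∑ i, ν i = 1) :
    ∑ j, |(∑ i, μ i * P i j) - (∑ i, ν i * P i j)| ≤
      (1 - (N : ℝ) * δ) * ∑ i, |μ i - ν i| :=
  markov_l1_contraction_general N P hrow δ hδ μ ν hμ1 hν1
end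

section
/- Let K : [0,1] × [0,1] → ℝ be a continuous Markov transition density: K ≥ 0 and ∫₀¹ K(x,y) dy = 1 for all x. Suppose there is δ > 0 with K(x,y) ≥ δ for all x,y. Define the iterated kernels K₁ = K and K_{n+1}(x,y) = ∫₀¹ K_n(x,z) K(z,y) dz. Then for all x, x' ∈ [0,1] and all y, |K_n(x,y) − K_n(x',y)| ≤ M(1 − δ)^{n−1}, where M = sup K − inf K; in particular K_n(x,y) − K_n(x',y) → 0 uniformly as n → ∞. -/
/-!
Write `Dₙ = Kₙ(x,·) - Kₙ(x',·)`. Every row of `Kₙ` integrates to `1`, so `Dₙ` has integral zero and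
`Dₙ₊₁(y) = ∫ Dₙ(z) (K(z,y) - c) dz` for every constant `c`. With `c = δ` the factor `K(z,y) - δ`
is nonnegative with row integrals `1 - δ`, so Fubini gives the L¹ contraction
`‖Dₙ₊₁‖₁ ≤ (1 - δ) ‖Dₙ‖₁`, and `‖D₁‖₁ ≤ 2(1 - δ)`. With `c` the midpoint of the range of `K` the
factor is bounded by `M / 2`, which turns the L¹ bound into the uniform bound.
-/

open MeasureTheory

/-- Iterated kernels: `iterK K n` is the `(n+1)`-st iterated kernel `K_{n+1}`,
so `iterK K 0 = K₁ = K` and `K_{n+2}(x,y) = ∫₀¹ K_{n+1}(x,z) K(z,y) dz`. -/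
noncomputable def iterK (K : ℝ → ℝ → ℝ) : ℕ → ℝ → ℝ → ℝ
  | 0 => K
  | n + 1 => fun x y => ∫ z in (0:ℝ)..1, iterK K n x z * K z y

open Set

theorem intervalIntegral_swap_of_continuous {F : ℝ → ℝ → ℝ} (hF : Continuous (Function.uncurry F))
    (a b c d : ℝ) :
    ∫ x in a..b, ∫ y in c..d, F x y = ∫ y in c..d, ∫ x in a..b, F x y :=
  intervalIntegral_intervalIntegral_swap <|
    (hF.continuousOn.integrableOn_compact (isCompact_uIcc.prod isCompact_uIcc)).mono_set
      (prod_mono uIoc_subset_uIcc uIoc_subset_uIcc)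

theorem abs_sub_midpoint_le_of_mem {S : Set ℝ} (hA : BddAbove S) (hB : BddBelow S) {s : ℝ}
    (hs : s ∈ S) : |s - (sSup S + sInf S) / 2| ≤ (sSup S - sInf S) / 2 := by
  have hsup := le_csSup hA hs
  have hinf := csInf_le hB hs
  rw [abs_le]
  constructor <;> linarith

section ZeroMean

variable {D f : ℝ → ℝ} {a b : ℝ} {μ : Measure ℝ}

theorem integral_mul_sub_const_of_integral_eq_zero (hD : IntervalIntegrable D μ a b)
    (hDf : IntervalIntegrable (fun z => D z * f z) μ a b) (h0 : ∫ z in a..b, D z ∂μ = 0)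
    (c : ℝ) : ∫ z in a..b, D z * (f z - c) ∂μ = ∫ z in a..b, D z * f z ∂μ := by
  simp_rw [mul_sub]
  rw [intervalIntegral.integral_sub hDf (hD.mul_const c), intervalIntegral.integral_mul_const,
    h0, zero_mul, sub_zero]

theorem abs_integral_mul_le_of_integral_eq_zero (hab : a ≤ b) (hD : IntervalIntegrable D μ a b)
    (hDf : IntervalIntegrable (fun z => D z * f z) μ a b) (h0 : ∫ z in a..b, D z ∂μ = 0)
    (c : ℝ) : |∫ z in a..b, D z * f z ∂μ| ≤ ∫ z in a..b, |D z| * |f z - c| ∂μ := by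
  rw [← integral_mul_sub_const_of_integral_eq_zero hD hDf h0 c]
  simpa only [abs_mul] using
    intervalIntegral.abs_integral_le_integral_abs (f := fun z => D z * (f z - c)) (μ := μ) hab

end ZeroMean

section Kernel

variable {K : ℝ → ℝ → ℝ}

theorem continuous_iterK (hK : Continuous (Function.uncurry K)) (n : ℕ) :
    Continuous (Function.uncurry (iterK K n)) := by
  induction n with
  | zero => exact hK
  | succ n ih =>
    exact intervalIntegral.continuous_parametric_intervalIntegral_of_continuous'
      (f := fun (p : ℝ × ℝ) z => iterK K n p.1 z * K z p.2) (by fun_prop) 0 1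

theorem iterK_succ_sub_iterK_succ (hK : Continuous (Function.uncurry K)) (n : ℕ) (x x' y : ℝ) :
    iterK K (n + 1) x y - iterK K (n + 1) x' y =
      ∫ z in (0:ℝ)..1, (iterK K n x z - iterK K n x' z) * K z y := by
  have hc := continuous_iterK hK n
  simp_rw [sub_mul]
  exact (intervalIntegral.integral_sub (Continuous.intervalIntegrable (by fun_prop) 0 1)
    (Continuous.intervalIntegrable (by fun_prop) 0 1)).symm

variable (hK : Continuous (Function.uncurry K))
  (hrow : ∀ x ∈ Icc (0:ℝ) 1, ∫ y in (0:ℝ)..1, K x y = 1)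
include hK hrow

theorem integral_iterK_eq_one (n : ℕ) {x : ℝ} (hx : x ∈ Icc (0:ℝ) 1) :
    ∫ y in (0:ℝ)..1, iterK K n x y = 1 := by
  induction n generalizing x with
  | zero => exact hrow x hx
  | succ n ih =>
    have hc := continuous_iterK hK n
    calc ∫ y in (0:ℝ)..1, ∫ z in (0:ℝ)..1, iterK K n x z * K z y
        = ∫ z in (0:ℝ)..1, ∫ y in (0:ℝ)..1, iterK K n x z * K z y :=
          intervalIntegral_swap_of_continuous (by fun_prop) 0 1 0 1
      _ = ∫ z in (0:ℝ)..1, iterK K n x z := by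
          refine intervalIntegral.integral_congr fun z hz => ?_
          rw [uIcc_of_le zero_le_one] at hz
          simp only [intervalIntegral.integral_const_mul, hrow z hz, mul_one]
      _ = 1 := ih hx

theorem abs_iterK_succ_sub_le (n : ℕ) {x x' : ℝ} (hx : x ∈ Icc (0:ℝ) 1) (hx' : x' ∈ Icc (0:ℝ) 1)
    (y c : ℝ) :
    |iterK K (n + 1) x y - iterK K (n + 1) x' y| ≤
      ∫ z in (0:ℝ)..1, |iterK K n x z - iterK K n x' z| * |K z y - c| := by
  have hc := continuous_iterK hK n
  have hmean : ∫ z in (0:ℝ)..1, (iterK K n x z - iterK K n x' z) = 0 := by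
    rw [intervalIntegral.integral_sub (Continuous.intervalIntegrable (by fun_prop) 0 1)
      (Continuous.intervalIntegrable (by fun_prop) 0 1), integral_iterK_eq_one hK hrow n hx,
      integral_iterK_eq_one hK hrow n hx', sub_self]
  rw [iterK_succ_sub_iterK_succ hK]
  exact abs_integral_mul_le_of_integral_eq_zero zero_le_one
    (Continuous.intervalIntegrable (by fun_prop) 0 1)
    (Continuous.intervalIntegrable (by fun_prop) 0 1) hmean c

variable {δ : ℝ} (hpos : ∀ x ∈ Icc (0:ℝ) 1, ∀ y ∈ Icc (0:ℝ) 1, δ ≤ K x y)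
include hpos

theorem integral_abs_sub_eq_one_sub {z : ℝ} (hz : z ∈ Icc (0:ℝ) 1) :
    ∫ y in (0:ℝ)..1, |K z y - δ| = 1 - δ := by
  have hc : Continuous (K z) := hK.comp (Continuous.prodMk_right z)
  calc ∫ y in (0:ℝ)..1, |K z y - δ| = ∫ y in (0:ℝ)..1, (K z y - δ) := by
        refine intervalIntegral.integral_congr fun y hy => ?_
        rw [uIcc_of_le zero_le_one] at hy
        exact abs_of_nonneg (sub_nonneg.2 (hpos z hz y hy))
    _ = 1 - δ := by
        rw [intervalIntegral.integral_sub (hc.intervalIntegrable 0 1) intervalIntegrable_const,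
          hrow z hz, intervalIntegral.integral_const]
        simp

theorem integral_abs_iterK_sub_le (n : ℕ) {x x' : ℝ} (hx : x ∈ Icc (0:ℝ) 1)
    (hx' : x' ∈ Icc (0:ℝ) 1) :
    ∫ y in (0:ℝ)..1, |iterK K n x y - iterK K n x' y| ≤ 2 * (1 - δ) ^ (n + 1) := by
  have h0 : (0:ℝ) ∈ Icc (0:ℝ) 1 := ⟨le_rfl, zero_le_one⟩
  have h1δ : 0 ≤ 1 - δ := integral_abs_sub_eq_one_sub hK hrow hpos h0 ▸
    intervalIntegral.integral_nonneg zero_le_one fun _ _ => abs_nonneg _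
  induction n with
  | zero =>
    calc ∫ y in (0:ℝ)..1, |K x y - K x' y|
        ≤ ∫ y in (0:ℝ)..1, (|K x y - δ| + |K x' y - δ|) :=
          intervalIntegral.integral_mono zero_le_one
            (Continuous.intervalIntegrable (by fun_prop) 0 1)
            (Continuous.intervalIntegrable (by fun_prop) 0 1)
            fun y => by simpa only [Real.dist_eq] using dist_triangle_right (K x y) (K x' y) δ
      _ = 2 * (1 - δ) ^ (0 + 1) := by
          rw [intervalIntegral.integral_add (Continuous.intervalIntegrable (by fun_prop) 0 1)
            (Continuous.intervalIntegrable (by fun_prop) 0 1),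
            integral_abs_sub_eq_one_sub hK hrow hpos hx,
            integral_abs_sub_eq_one_sub hK hrow hpos hx']
          ring
  | succ n ih =>
    have hc := continuous_iterK hK n
    have hc' := continuous_iterK hK (n + 1)
    calc ∫ y in (0:ℝ)..1, |iterK K (n + 1) x y - iterK K (n + 1) x' y|
        ≤ ∫ y in (0:ℝ)..1, ∫ z in (0:ℝ)..1, |iterK K n x z - iterK K n x' z| * |K z y - δ| :=
          intervalIntegral.integral_mono zero_le_one
            (Continuous.intervalIntegrable (by fun_prop) 0 1)
            (Continuous.intervalIntegrable (by fun_prop) 0 1)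
            fun y => abs_iterK_succ_sub_le hK hrow n hx hx' y δ
      _ = ∫ z in (0:ℝ)..1, ∫ y in (0:ℝ)..1, |iterK K n x z - iterK K n x' z| * |K z y - δ| :=
          intervalIntegral_swap_of_continuous (by fun_prop) 0 1 0 1
      _ = ∫ z in (0:ℝ)..1, |iterK K n x z - iterK K n x' z| * (1 - δ) := by
          refine intervalIntegral.integral_congr fun z hz => ?_
          rw [uIcc_of_le zero_le_one] at hz
          simp only [intervalIntegral.integral_const_mul,
            integral_abs_sub_eq_one_sub hK hrow hpos hz]
      _ = (∫ z in (0:ℝ)..1, |iterK K n x z - iterK K n x' z|) * (1 - δ) :=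
          intervalIntegral.integral_mul_const _ _
      _ ≤ 2 * (1 - δ) ^ (n + 1) * (1 - δ) := by gcongr
      _ = 2 * (1 - δ) ^ (n + 1 + 1) := by ring

theorem abs_iterK_succ_sub_le_mul (n : ℕ) {x x' : ℝ} (hx : x ∈ Icc (0:ℝ) 1)
    (hx' : x' ∈ Icc (0:ℝ) 1) {y c m : ℝ} (hm : ∀ z ∈ Icc (0:ℝ) 1, |K z y - c| ≤ m) :
    |iterK K (n + 1) x y - iterK K (n + 1) x' y| ≤ 2 * (1 - δ) ^ (n + 1) * m := by
  have hc := continuous_iterK hK n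
  have hm0 : 0 ≤ m := (abs_nonneg _).trans (hm 0 ⟨le_rfl, zero_le_one⟩)
  calc |iterK K (n + 1) x y - iterK K (n + 1) x' y|
      ≤ ∫ z in (0:ℝ)..1, |iterK K n x z - iterK K n x' z| * |K z y - c| :=
        abs_iterK_succ_sub_le hK hrow n hx hx' y c
    _ ≤ ∫ z in (0:ℝ)..1, |iterK K n x z - iterK K n x' z| * m :=
        intervalIntegral.integral_mono_on zero_le_one
          (Continuous.intervalIntegrable (by fun_prop) 0 1)
          (Continuous.intervalIntegrable (by fun_prop) 0 1)
          fun z hz => mul_le_mul_of_nonneg_left (hm z hz) (abs_nonneg _)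
    _ = (∫ z in (0:ℝ)..1, |iterK K n x z - iterK K n x' z|) * m :=
        intervalIntegral.integral_mul_const _ _
    _ ≤ 2 * (1 - δ) ^ (n + 1) * m := by
        gcongr
        exact integral_abs_iterK_sub_le hK hrow hpos n hx hx'

end Kernel

theorem hostinsky_kernel_contraction_general (K : ℝ → ℝ → ℝ) (δ M : ℝ)
    (hK : Continuous fun p : ℝ × ℝ => K p.1 p.2)
    (hpos : ∀ x ∈ Set.Icc (0:ℝ) 1, ∀ y ∈ Set.Icc (0:ℝ) 1, δ ≤ K x y)
    (hrow : ∀ x ∈ Set.Icc (0:ℝ) 1, ∫ y in (0:ℝ)..1, K x y = 1)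
    (hM : M = sSup (Set.image2 K (Set.Icc 0 1) (Set.Icc 0 1)) -
              sInf (Set.image2 K (Set.Icc 0 1) (Set.Icc 0 1))) :
    ∀ n : ℕ, ∀ x ∈ Set.Icc (0:ℝ) 1, ∀ x' ∈ Set.Icc (0:ℝ) 1, ∀ y ∈ Set.Icc (0:ℝ) 1,
      |iterK K n x y - iterK K n x' y| ≤ M * (1 - δ) ^ n := by
  have hS : IsCompact (image2 K (Icc (0:ℝ) 1) (Icc 0 1)) := by
    rw [← image_uncurry_prod]
    exact (isCompact_Icc.prod isCompact_Icc).image hK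
  set S := image2 K (Icc (0:ℝ) 1) (Icc 0 1)
  set c := (sSup S + sInf S) / 2
  have hKc : ∀ z ∈ Icc (0:ℝ) 1, ∀ y ∈ Icc (0:ℝ) 1, |K z y - c| ≤ M / 2 := fun z hz y hy =>
    hM ▸ abs_sub_midpoint_le_of_mem hS.bddAbove hS.bddBelow (mem_image2_of_mem hz hy)
  intro n x hx x' hx' y hy
  cases n with
  | zero =>
    calc |K x y - K x' y| ≤ |K x y - c| + |K x' y - c| := by
          simpa only [Real.dist_eq] using dist_triangle_right (K x y) (K x' y) c
      _ ≤ M / 2 + M / 2 := add_le_add (hKc x hx y hy) (hKc x' hx' y hy)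
      _ = M * (1 - δ) ^ 0 := by ring
  | succ n =>
    exact (abs_iterK_succ_sub_le_mul hK hrow hpos n hx hx' fun z hz => hKc z hz y hy).trans_eq
      (by ring)

theorem hostinsky_kernel_contraction (K : ℝ → ℝ → ℝ) (δ M : ℝ)
    (hK : Continuous fun p : ℝ × ℝ => K p.1 p.2) (hδ : 0 < δ)
    (hpos : ∀ x ∈ Set.Icc (0:ℝ) 1, ∀ y ∈ Set.Icc (0:ℝ) 1, δ ≤ K x y)
    (hrow : ∀ x ∈ Set.Icc (0:ℝ) 1, ∫ y in (0:ℝ)..1, K x y = 1)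
    (hM : M = sSup (Set.image2 K (Set.Icc 0 1) (Set.Icc 0 1)) -
              sInf (Set.image2 K (Set.Icc 0 1) (Set.Icc 0 1))) :
    ∀ n : ℕ, ∀ x ∈ Set.Icc (0:ℝ) 1, ∀ x' ∈ Set.Icc (0:ℝ) 1, ∀ y ∈ Set.Icc (0:ℝ) 1,
      |iterK K n x y - iterK K n x' y| ≤ M * (1 - δ) ^ n :=
  hostinsky_kernel_contraction_general K δ M hK hpos hrow hM
end

section
/- Let P be an N×N stochastic matrix with strictly positive entries, and for a vector v ∈ ℝᴺ define osc(v) = max_i v_i − min_i v_i. Then osc(P v) ≤ (1 − Nδ)·osc(v), where δ = min_{i,j} P i j. -/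
/-!
Split each pair of rows as `p = c + (p - c)`, `q = c + (q - c)` with the common part
`c = min p q`. The common part cancels in `p ⬝ v - q ⬝ v`, and the remainders are nonnegative
weights of total mass `1 - ∑ c`, so the difference is at most `(1 - ∑ c) (max v - min v)`.
Every entry of `c` is at least `δ`, whence `∑ c ≥ N δ`.
-/

open Finset

section

variable {ι : Type*} [Fintype ι]

lemma sum_mul_le_sum_mul_const {w v : ι → ℝ} {M : ℝ} (hw : ∀ j, 0 ≤ w j) (hv : ∀ j, v j ≤ M) :
    ∑ j, w j * v j ≤ (∑ j, w j) * M := by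
  rw [sum_mul]
  exact sum_le_sum fun j _ => mul_le_mul_of_nonneg_left (hv j) (hw j)

lemma sum_mul_const_le_sum_mul {w v : ι → ℝ} {m : ℝ} (hw : ∀ j, 0 ≤ w j) (hv : ∀ j, m ≤ v j) :
    (∑ j, w j) * m ≤ ∑ j, w j * v j := by
  rw [sum_mul]
  exact sum_le_sum fun j _ => mul_le_mul_of_nonneg_left (hv j) (hw j)

lemma sum_mul_sub_sum_mul_le_overlap {p q v : ι → ℝ} {m M : ℝ}
    (hp : ∑ j, p j = 1) (hq : ∑ j, q j = 1) (hm : ∀ j, m ≤ v j) (hM : ∀ j, v j ≤ M) :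
    ∑ j, p j * v j - ∑ j, q j * v j ≤ (1 - ∑ j, min (p j) (q j)) * (M - m) := by
  set c := fun j => min (p j) (q j)
  have hpc : ∑ j, (p j - c j) * v j ≤ (1 - ∑ j, c j) * M := by
    simpa only [sum_sub_distrib, hp] using
      sum_mul_le_sum_mul_const (fun j => sub_nonneg.2 (min_le_left (p j) (q j))) hM
  have hqc : (1 - ∑ j, c j) * m ≤ ∑ j, (q j - c j) * v j := by
    simpa only [sum_sub_distrib, hq] using
      sum_mul_const_le_sum_mul (fun j => sub_nonneg.2 (min_le_right (p j) (q j))) hm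
  have hsplit : ∑ j, p j * v j - ∑ j, q j * v j
      = ∑ j, (p j - c j) * v j - ∑ j, (q j - c j) * v j := by
    simp only [sub_mul, sum_sub_distrib]
    ring
  linarith

end

lemma ciSup_sub_ciInf_le {ι : Type*} [Nonempty ι] {f : ι → ℝ} {C : ℝ} (h : ∀ i k, f i - f k ≤ C) :
    (⨆ i, f i) - ⨅ i, f i ≤ C := by
  rw [sub_le_iff_le_add]
  refine ciSup_le fun i => ?_
  rw [← sub_le_iff_le_add']
  exact le_ciInf fun k => by linarith [h i k]

theorem osc_contraction_general (N : ℕ) (P : Matrix (Fin N) (Fin N) ℝ)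
    (hrow : ∀ i, ∑ j, P i j = 1)
    (δ : ℝ) (hδ : IsLeast (Set.range fun p : Fin N × Fin N => P p.1 p.2) δ)
    (v : Fin N → ℝ) :
    (⨆ i, ∑ j, P i j * v j) - (⨅ i, ∑ j, P i j * v j) ≤
      (1 - (N : ℝ) * δ) * ((⨆ i, v i) - (⨅ i, v i)) := by
  obtain ⟨⟨i₀, _⟩, _⟩ := hδ.1
  have : Nonempty (Fin N) := ⟨i₀⟩
  have hδle : ∀ i j, δ ≤ P i j := fun i j => hδ.2 ⟨(i, j), rfl⟩
  have hosc : 0 ≤ (⨆ i, v i) - ⨅ i, v i :=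
    sub_nonneg.2 (ciInf_le_ciSup (Finite.bddBelow_range v) (Finite.bddAbove_range v))
  refine ciSup_sub_ciInf_le fun i k => ?_
  have hoverlap : (N : ℝ) * δ ≤ ∑ j, min (P i j) (P k j) := by
    simpa using card_nsmul_le_sum univ _ δ fun j _ => le_min (hδle i j) (hδle k j)
  calc ∑ j, P i j * v j - ∑ j, P k j * v j
      ≤ (1 - ∑ j, min (P i j) (P k j)) * ((⨆ i, v i) - ⨅ i, v i) :=
        sum_mul_sub_sum_mul_le_overlap (hrow i) (hrow k)
          (fun j => ciInf_le (Finite.bddBelow_range v) j)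
          (fun j => le_ciSup (Finite.bddAbove_range v) j)
    _ ≤ (1 - (N : ℝ) * δ) * ((⨆ i, v i) - ⨅ i, v i) := by gcongr

theorem osc_contraction (N : ℕ) (hN : 0 < N) (P : Matrix (Fin N) (Fin N) ℝ)
    (hpos : ∀ i j, 0 < P i j) (hrow : ∀ i, ∑ j, P i j = 1)
    (δ : ℝ) (hδ : IsLeast (Set.range fun p : Fin N × Fin N => P p.1 p.2) δ)
    (v : Fin N → ℝ) :
    (⨆ i, ∑ j, P i j * v j) - (⨅ i, ∑ j, P i j * v j) ≤
      (1 - (N : ℝ) * δ) * ((⨆ i, v i) - (⨅ i, v i)) :=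
  osc_contraction_general N P hrow δ hδ v
end

section
/- Let needle length ℓ and spacing d satisfy 0 < ℓ ≤ d. Suppose the needle's midpoint lands in the strip [0, n·d] with an arbitrary continuous probability density f on [0, n·d] for its x-coordinate (perpendicular to the lines), while the angle Θ is uniform on [0, π) and independent of the position. Let p_n(f) be the probability that the needle (of length ℓ at angle Θ about its midpoint) crosses one of the lines x = kd, k = 0,…,n. If f is the uniform density on [0, nd], then p_n(f) tends to 2ℓ/(πd) as n → ∞ — indeed p_n(f) equals 2ℓ/(πd) up to a boundary correction term bounded by C/n for some constant C depending only on ℓ and d. -/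
open MeasureTheory Set

/-- The probability that a needle of length `ℓ`, with midpoint `x`-coordinate uniform
on `[0, n·d]` and angle uniform on `[0, π)` (independently), crosses one of the lines
`x = k·d`, `k = 0, …, n`. -/
noncomputable def buffonFiniteProb (ℓ d : ℝ) (n : ℕ) : ℝ :=
  ((((ENNReal.ofReal (1 / ((n : ℝ) * d))) • volume.restrict (Icc (0:ℝ) ((n : ℝ) * d))).prod
      ((ENNReal.ofReal (1 / Real.pi)) • volume.restrict (Ico (0:ℝ) Real.pi)))
    {p : ℝ × ℝ | ∃ k : ℕ, k ≤ n ∧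
      (k : ℝ) * d ∈ uIcc (p.1 - ℓ / 2 * Real.cos p.2) (p.1 + ℓ / 2 * Real.cos p.2)}).toReal

/-!
For a fixed angle `θ` the needle meets the line `x = k d` exactly when its midpoint lies in the
window of radius `h = (ℓ/2)|cos θ|` around `k d`. Since `2h ≤ d` these `n + 1` windows overlap only
in endpoints, and inside `[0, n d]` the windows around `0` and `n d` are cut in half, so they cover
a length of exactly `2 n h`. Averaging over `θ` with `∫₀^π |cos θ| dθ = 2` gives
`p_n = 2ℓ/(πd)` exactly for every `n ≥ 1`: the boundary correction vanishes.
-/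

open Metric Real

lemma uIcc_sub_add_eq_closedBall (x c : ℝ) : uIcc (x - c) (x + c) = closedBall x |c| := by
  rw [Real.closedBall_eq_Icc]
  rcases le_total 0 c with hc | hc
  · rw [abs_of_nonneg hc, uIcc_of_le (by linarith)]
  · rw [abs_of_nonpos hc, uIcc_of_ge (by linarith), sub_neg_eq_add, ← sub_eq_add_neg]

lemma Real.volume_closedBall_inter_closedBall_eq_zero {a b h : ℝ} (hab : 2 * h ≤ |a - b|) :
    volume (closedBall a h ∩ closedBall b h) = 0 := by
  rw [Real.closedBall_eq_Icc, Real.closedBall_eq_Icc, Icc_inter_Icc, Real.volume_Icc,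
    ENNReal.ofReal_eq_zero, max_sub_sub_right, min_add_add_right]
  linarith [max_sub_min_eq_abs' a b]

lemma aedisjoint_closedBall_natCast_mul {d h : ℝ} (hh : 2 * h ≤ d) {j k : ℕ} (hjk : j ≠ k) :
    AEDisjoint volume (closedBall (j * d) h) (closedBall (k * d) h) := by
  refine Real.volume_closedBall_inter_closedBall_eq_zero (hh.trans ?_)
  have hjk' : (1 : ℝ) ≤ |(j : ℝ) - k| := by
    exact_mod_cast Int.one_le_abs (sub_ne_zero.2 (Int.ofNat_inj.not.2 hjk))
  rw [← sub_mul, abs_mul]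
  exact (le_abs_self d).trans (le_mul_of_one_le_left (abs_nonneg d) hjk')

lemma sum_range_min_sub_max_eq {d h : ℝ} (h0 : 0 ≤ h) (hh : h ≤ d) (n : ℕ) :
    ∑ k ∈ Finset.range (n + 1), (min (k * d + h) (n * d) - max (k * d - h) 0) = 2 * n * h := by
  have right_half : ∀ k ∈ Finset.range n, min (k * d + h) (n * d) - k * d = h := fun k hk => by
    have : (k + 1 : ℝ) * d ≤ n * d := by
      gcongr
      · linarith
      · exact_mod_cast Finset.mem_range.1 hk
    rw [min_eq_left (by linarith)]; ring
  have left_half : ∀ k ∈ Finset.range n,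
      ((k + 1 : ℕ) : ℝ) * d - max (((k + 1 : ℕ) : ℝ) * d - h) 0 = h := fun k _ => by
    have : d ≤ ((k + 1 : ℕ) : ℝ) * d := by
      push_cast; nlinarith [(k.cast_nonneg : (0 : ℝ) ≤ k)]
    rw [max_eq_left (by linarith)]; ring
  calc ∑ k ∈ Finset.range (n + 1), (min (k * d + h) (n * d) - max (k * d - h) 0)
      = ∑ k ∈ Finset.range (n + 1), (min (k * d + h) (n * d) - k * d)
        + ∑ k ∈ Finset.range (n + 1), (k * d - max (k * d - h) 0) := by
        rw [← Finset.sum_add_distrib]; congr! 1 with k; ring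
    _ = n * h + n * h := by
        rw [Finset.sum_range_succ, Finset.sum_range_succ', Finset.sum_congr rfl right_half,
          Finset.sum_congr rfl left_half]
        simp [h0]
    _ = 2 * n * h := by ring

lemma volume_biUnion_closedBall_inter_Icc {d h : ℝ} (h0 : 0 ≤ h) (hh : 2 * h ≤ d) (n : ℕ) :
    volume ((⋃ k ∈ Finset.range (n + 1), closedBall (k * d) h) ∩ Icc 0 (n * d)) =
      ENNReal.ofReal (2 * n * h) := by
  have hd : 0 ≤ d := by linarith
  have piece_nonneg : ∀ k ∈ Finset.range (n + 1),
      0 ≤ min (k * d + h) (n * d) - max (k * d - h) 0 := fun k hk => by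
    have hkn : (k : ℝ) * d ≤ n * d := by
      gcongr; exact_mod_cast Finset.mem_range_succ_iff.1 hk
    have hk0 : 0 ≤ (k : ℝ) * d := by positivity
    rw [sub_nonneg]
    exact (max_le (by linarith) hk0).trans (le_min (by linarith) hkn)
  rw [iUnion₂_inter, measure_biUnion_finset₀, ← sum_range_min_sub_max_eq h0 (by linarith) n,
    ENNReal.ofReal_sum_of_nonneg piece_nonneg]
  · refine Finset.sum_congr rfl fun k _ => ?_
    rw [Real.closedBall_eq_Icc, Icc_inter_Icc, Real.volume_Icc]
  · exact fun j _ k _ hjk => (aedisjoint_closedBall_natCast_mul hh hjk).mono inter_subset_left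
      inter_subset_left
  · exact fun k _ => (measurableSet_closedBall.inter measurableSet_Icc).nullMeasurableSet

lemma integral_abs_cos : ∫ x in (0 : ℝ)..π, |cos x| = 2 := by
  have hπ := pi_pos
  have first_half : ∫ x in (0 : ℝ)..π / 2, |cos x| = 1 := by
    rw [intervalIntegral.integral_congr (g := cos) fun x hx => by
      rw [uIcc_of_le (by positivity)] at hx
      exact abs_of_nonneg (cos_nonneg_of_mem_Icc ⟨by linarith [hx.1], hx.2⟩)]
    simp
  have second_half : ∫ x in π / 2..π, |cos x| = 1 := by
    rw [intervalIntegral.integral_congr (g := fun x => -cos x) fun x hx => by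
      rw [uIcc_of_le (by linarith)] at hx
      exact abs_of_nonpos (cos_nonpos_of_pi_div_two_le_of_le hx.1 (by linarith [hx.2]))]
    simp
  have hint (a b : ℝ) : IntervalIntegrable (fun x => |cos x|) volume a b :=
    continuous_cos.abs.intervalIntegrable a b
  rw [← intervalIntegral.integral_add_adjacent_intervals (hint 0 (π / 2)) (hint (π / 2) π),
    first_half, second_half]
  norm_num

lemma buffon_crossing_set_eq (ℓ d : ℝ) (n : ℕ) :
    {p : ℝ × ℝ | ∃ k : ℕ, k ≤ n ∧
      (k : ℝ) * d ∈ uIcc (p.1 - ℓ / 2 * cos p.2) (p.1 + ℓ / 2 * cos p.2)} =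
    {p | p.1 ∈ ⋃ k ∈ Finset.range (n + 1), closedBall (k * d) |ℓ / 2 * cos p.2|} := by
  ext p
  simp only [mem_ofPred_eq, uIcc_sub_add_eq_closedBall, mem_closedBall_comm, mem_iUnion,
    Finset.mem_range_succ_iff, exists_prop]

lemma measurableSet_buffon_crossing_set (ℓ d : ℝ) (n : ℕ) :
    MeasurableSet
      {p : ℝ × ℝ | p.1 ∈ ⋃ k ∈ Finset.range (n + 1), closedBall (k * d) |ℓ / 2 * cos p.2|} := by
  simp only [mem_iUnion, ofPred_exists, mem_closedBall]
  exact Finset.measurableSet_biUnion _ fun k _ => measurableSet_le (by fun_prop) (by fun_prop)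

theorem buffonFiniteProb_eq {ℓ d : ℝ} (hℓ : 0 < ℓ) (hld : ℓ ≤ d) {n : ℕ} (hn : n ≠ 0) :
    buffonFiniteProb ℓ d n = 2 * ℓ / (π * d) := by
  have hd : 0 < d := hℓ.trans_le hld
  have hn' : (0 : ℝ) < n := by positivity
  have slice (θ : ℝ) : volume ((⋃ k ∈ Finset.range (n + 1),
      closedBall (k * d) |ℓ / 2 * cos θ|) ∩ Icc 0 (n * d)) =
        ENNReal.ofReal (n * ℓ * |cos θ|) := by
    rw [volume_biUnion_closedBall_inter_Icc (abs_nonneg _), abs_mul, abs_of_pos (half_pos hℓ)]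
    · ring_nf
    · rw [abs_mul, abs_of_pos (half_pos hℓ)]
      nlinarith [abs_cos_le_one θ, abs_nonneg (cos θ)]
  have angle_integral : ∫⁻ θ in Ico 0 π, ENNReal.ofReal (n * ℓ * |cos θ|) =
      ENNReal.ofReal (n * ℓ * 2) := by
    rw [← ofReal_integral_eq_lintegral_ofReal, integral_Ico_eq_integral_Ioo,
      ← integral_Ioc_eq_integral_Ioo, ← intervalIntegral.integral_of_le pi_pos.le,
      intervalIntegral.integral_const_mul, integral_abs_cos]
    · exact (Continuous.integrableOn_Icc (by fun_prop)).mono_set Ico_subset_Icc_self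
    · exact Filter.Eventually.of_forall fun θ => by positivity
  unfold buffonFiniteProb
  rw [buffon_crossing_set_eq, Measure.prod_apply_symm (measurableSet_buffon_crossing_set ℓ d n),
    lintegral_smul_measure]
  simp_rw [Measure.smul_apply, Measure.restrict_apply' measurableSet_Icc]
  simp only [preimage_ofPred_eq, ofPred_mem_eq, slice, smul_eq_mul]
  rw [lintegral_const_mul' _ _ ENNReal.ofReal_ne_top, angle_integral,
    ← ENNReal.ofReal_mul (by positivity), ← ENNReal.ofReal_mul (by positivity),
    ENNReal.toReal_ofReal (by positivity)]
  field_simp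

theorem buffon_finite_floor (ℓ d : ℝ) (hℓ : 0 < ℓ) (hld : ℓ ≤ d) :
    ∃ C > (0:ℝ),
      (∀ n : ℕ, 1 ≤ n → |buffonFiniteProb ℓ d n - 2 * ℓ / (Real.pi * d)| ≤ C / n) ∧
      Filter.Tendsto (fun n : ℕ => buffonFiniteProb ℓ d n) Filter.atTop
        (nhds (2 * ℓ / (Real.pi * d))) := by
  have prob_eq (n : ℕ) (hn : 1 ≤ n) : buffonFiniteProb ℓ d n = 2 * ℓ / (π * d) :=
    buffonFiniteProb_eq hℓ hld (by omega)
  refine ⟨1, one_pos, fun n hn => ?_, ?_⟩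
  · rw [prob_eq n hn, sub_self, abs_zero]
    positivity
  · exact tendsto_const_nhds.congr' (Filter.eventually_atTop.2 ⟨1, fun n hn => (prob_eq n hn).symm⟩)
end

section
/- Let g : ℝ → ℝ be continuous and periodic with period T > 0, and let f : ℝ → ℝ be a continuous integrable probability density. Then ∫ f(x) g(λ x) dx → (1/T) ∫₀ᵀ g(t) dt as λ → ∞. -/
/-!
Integration against the density `f` and the rescaling `x ↦ λx` turn `G ↦ ∫ f(x) G(λx) dx` into a
family of continuous linear functionals on `C(ℝ/Tℤ)`, all of norm at most `‖f‖₁`. Such a bounded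
family converges pointwise as soon as it converges on a set with dense span, and the characters
`e_n(t) = exp(2πint/T)` form one. For `n = 0` the integral is `∫ f`; for `n ≠ 0` it is the Fourier
transform of `f` at `-nλ/T`, which tends to `0` by the Riemann–Lebesgue lemma, matching the
vanishing mean of `e_n`.
-/

open MeasureTheory Filter Topology

theorem ContinuousLinearMap.tendsto_apply_of_span_dense {ι 𝕜 E F : Type*}
    [NontriviallyNormedField 𝕜] [NormedAddCommGroup E] [NormedSpace 𝕜 E] [NormedAddCommGroup F]
    [NormedSpace 𝕜 F] {l : Filter ι} {L : ι → E →L[𝕜] F} {L' : E →L[𝕜] F} {C : ℝ}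
    (hL : ∀ i, ‖L i‖ ≤ C) {s : Set E} (hs : (Submodule.span 𝕜 s).topologicalClosure = ⊤)
    (h : ∀ x ∈ s, Tendsto (L · x) l (𝓝 (L' x))) (x : E) :
    Tendsto (L · x) l (𝓝 (L' x)) := by
  have hequi : Equicontinuous ((↑) ∘ L) :=
    ((NormedSpace.equicontinuous_TFAE L).out 5 1).mp (⟨C, hL⟩ : ∃ C, ∀ i, ‖L i‖ ≤ C)
  have hclosed : IsClosed {x | Tendsto (L · x) l (𝓝 (L' x))} :=
    hequi.isClosed_setOfPred_tendsto L'.continuous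
  have hspan : (Submodule.span 𝕜 s : Set E) ⊆ {x | Tendsto (L · x) l (𝓝 (L' x))} := by
    intro y hy
    induction hy using Submodule.span_induction with
    | mem y hy => exact h y hy
    | zero => simpa using tendsto_const_nhds
    | add y z _ _ hy hz => simpa using hy.add hz
    | smul c y _ hy => simpa using hy.const_smul c
  have hclosure := hclosed.closure_subset_iff.mpr hspan
  rw [← Submodule.topologicalClosure_coe, hs] at hclosure
  exact hclosure (Set.mem_univ x)

namespace ContinuousMap

section IntegralMulComp

variable {α X 𝕜 : Type*} [RCLike 𝕜] [MeasurableSpace α] {μ : Measure α} [TopologicalSpace X]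
  [CompactSpace X] [MeasurableSpace X] [OpensMeasurableSpace X] {w : α → 𝕜} {φ : α → X}

lemma _root_.MeasureTheory.Integrable.mul_continuousMap_comp (hw : Integrable w μ)
    (hφ : Measurable φ) (G : C(X, 𝕜)) : Integrable (fun a => w a * G (φ a)) μ :=
  hw.mul_bdd (G.continuous.measurable.comp hφ).aestronglyMeasurable
    (ae_of_all _ fun a => G.norm_coe_le_norm (φ a))

noncomputable def integralMulCompCLM (hw : Integrable w μ) (hφ : Measurable φ) :
    C(X, 𝕜) →L[𝕜] 𝕜 :=
  LinearMap.mkContinuous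
    { toFun := fun G => ∫ a, w a * G (φ a) ∂μ
      map_add' := fun G H => by
        simp only [add_apply, mul_add]
        exact integral_add (hw.mul_continuousMap_comp hφ G) (hw.mul_continuousMap_comp hφ H)
      map_smul' := fun c G => by
        simp only [smul_apply, smul_eq_mul, mul_left_comm _ c, RingHom.id_apply]
        exact integral_const_mul c _ }
    (∫ a, ‖w a‖ ∂μ) fun G => by
      calc ‖∫ a, w a * G (φ a) ∂μ‖ ≤ ∫ a, ‖w a‖ * ‖G‖ ∂μ := by
            refine norm_integral_le_of_norm_le (hw.norm.mul_const _) (ae_of_all _ fun a => ?_)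
            rw [norm_mul]
            gcongr
            exact G.norm_coe_le_norm (φ a)
        _ = (∫ a, ‖w a‖ ∂μ) * ‖G‖ := integral_mul_const _ _

lemma integralMulCompCLM_apply (hw : Integrable w μ) (hφ : Measurable φ) (G : C(X, 𝕜)) :
    integralMulCompCLM hw hφ G = ∫ a, w a * G (φ a) ∂μ := rfl

lemma norm_integralMulCompCLM_le (hw : Integrable w μ) (hφ : Measurable φ) :
    ‖integralMulCompCLM hw hφ‖ ≤ ∫ a, ‖w a‖ ∂μ :=
  LinearMap.mkContinuous_norm_le _ (integral_nonneg fun _ => norm_nonneg _) _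

end IntegralMulComp

section IntegralCLM

variable {X 𝕜 : Type*} [RCLike 𝕜] [TopologicalSpace X] [CompactSpace X] [MeasurableSpace X]
  [BorelSpace X] (μ : Measure X) [IsFiniteMeasure μ]

noncomputable def integralCLM : C(X, 𝕜) →L[𝕜] 𝕜 :=
  (L1.integralCLM' 𝕜).comp (toLp 1 μ 𝕜)

lemma integralCLM_apply (G : C(X, 𝕜)) : integralCLM μ G = ∫ x, G x ∂μ := by
  rw [integralCLM, ContinuousLinearMap.comp_apply, ← L1.integral_eq', L1.integral_eq_integral]
  exact integral_congr_ae (coeFn_toLp μ G)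

end IntegralCLM

end ContinuousMap

namespace AddCircle

variable {T : ℝ}

lemma tendsto_integral_mul_fourier_comp_mul_cocompact (hT : T ≠ 0) {n : ℤ} (hn : n ≠ 0)
    (f : ℝ → ℂ) :
    Tendsto (fun lam : ℝ => ∫ x, f x * fourier n ((lam * x : ℝ) : AddCircle T)) (cocompact ℝ)
      (𝓝 0) := by
  have hscale : Tendsto (fun lam : ℝ => -(n / T) * lam) (cocompact ℝ) (cocompact ℝ) :=
    tendsto_cocompact_mul_left₀ (by simp [hn, hT])
  refine ((Real.zero_at_infty_fourier f).comp hscale).congr fun lam => ?_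
  rw [Function.comp_apply, Real.fourier_real_eq_integral_exp_smul]
  congr 1 with x
  rw [fourier_coe_apply, smul_eq_mul, mul_comm]
  congr 2
  push_cast
  ring

variable [Fact (0 < T)]

lemma integral_fourier_haarAddCircle_of_ne_zero {n : ℤ} (hn : n ≠ 0) :
    ∫ z, fourier n z ∂(haarAddCircle (T := T)) = 0 := by
  simpa [fourierCoeff, fourier_zero, hn] using congr_fun (fourierCoeff_fourier (T := T) n) 0

theorem tendsto_integral_mul_comp_mul_cocompact {f : ℝ → ℂ} (hf : Integrable f)
    (G : C(AddCircle T, ℂ)) :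
    Tendsto (fun lam : ℝ => ∫ x, f x * G ((lam * x : ℝ) : AddCircle T)) (cocompact ℝ)
      (𝓝 ((∫ x, f x) * ∫ z, G z ∂haarAddCircle)) := by
  have hmeas (lam : ℝ) : Measurable fun x : ℝ => ((lam * x : ℝ) : AddCircle T) :=
    ((AddCircle.continuous_mk' T).comp (continuous_const_mul lam)).measurable
  have hfourier (n : ℤ) :
      Tendsto (fun lam : ℝ => ∫ x, f x * fourier n ((lam * x : ℝ) : AddCircle T)) (cocompact ℝ)
      (𝓝 ((∫ x, f x) * ∫ z, fourier (T := T) n z ∂haarAddCircle)) := by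
    rcases eq_or_ne n 0 with rfl | hn
    · simp
    · rw [integral_fourier_haarAddCircle_of_ne_zero hn, mul_zero]
      exact tendsto_integral_mul_fourier_comp_mul_cocompact (Fact.out : 0 < T).ne' hn f
  have key := ContinuousLinearMap.tendsto_apply_of_span_dense (l := cocompact ℝ)
    (L := fun lam => ContinuousMap.integralMulCompCLM hf (hmeas lam))
    (L' := (∫ x, f x) • ContinuousMap.integralCLM haarAddCircle)
    (fun lam => ContinuousMap.norm_integralMulCompCLM_le hf (hmeas lam))
    span_fourier_closure_eq_top (fun _ ⟨n, hn⟩ => hn ▸ by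
      simpa only [ContinuousMap.integralMulCompCLM_apply, smul_apply,
        ContinuousMap.integralCLM_apply, smul_eq_mul] using hfourier n) G
  simpa only [ContinuousMap.integralMulCompCLM_apply, smul_apply,
    ContinuousMap.integralCLM_apply, smul_eq_mul] using key

end AddCircle

theorem Function.Periodic.tendsto_integral_mul_comp_mul_cocompact {g : ℝ → ℂ} {T : ℝ}
    (hgp : Function.Periodic g T) (hg : Continuous g) (hT : 0 < T) {f : ℝ → ℂ}
    (hf : Integrable f) :
    Tendsto (fun lam : ℝ => ∫ x, f x * g (lam * x)) (cocompact ℝ)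
      (𝓝 ((∫ x, f x) * ((1 / T) * ∫ t in (0 : ℝ)..T, g t))) := by
  have : Fact (0 < T) := ⟨hT⟩
  let G : C(AddCircle T, ℂ) := ⟨hgp.lift, hg.quotient_liftOn' _⟩
  have hmean : ∫ z, G z ∂AddCircle.haarAddCircle = (1 / T) * ∫ t in (0 : ℝ)..T, g t := by
    rw [AddCircle.integral_haarAddCircle, ← AddCircle.intervalIntegral_preimage T 0, zero_add,
      Complex.real_smul, one_div, Complex.ofReal_inv]
    rfl
  rw [← hmean]
  exact AddCircle.tendsto_integral_mul_comp_mul_cocompact hf G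

theorem averaging_arbitrary_functions_general (g f : ℝ → ℝ) (T : ℝ) (hT : 0 < T)
    (hg : Continuous g) (hgp : Function.Periodic g T)
    (hfi : Integrable f)
    (hf1 : ∫ x, f x = 1) :
    Filter.Tendsto (fun lam : ℝ => ∫ x, f x * g (lam * x)) Filter.atTop
      (nhds ((1 / T) * ∫ t in (0:ℝ)..T, g t)) := by
  have hgpC : Function.Periodic (fun x => (g x : ℂ)) T := hgp.comp Complex.ofReal
  have key := hgpC.tendsto_integral_mul_comp_mul_cocompact (by fun_prop) hT hfi.ofReal
  have hlimit : ((1 / T * ∫ t in (0 : ℝ)..T, g t : ℝ) : ℂ) =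
      (∫ x, (f x : ℂ)) * ((1 / T) * ∫ t in (0 : ℝ)..T, (g t : ℂ)) := by
    rw [integral_complex_ofReal, hf1, intervalIntegral.integral_ofReal]
    push_cast
    ring
  have hintegral (lam : ℝ) :
      ((∫ x, f x * g (lam * x) : ℝ) : ℂ) = ∫ x, (f x : ℂ) * (g (lam * x) : ℂ) := by
    rw [← integral_complex_ofReal]
    push_cast
    rfl
  rw [← tendsto_ofReal_iff, hlimit]
  simp_rw [hintegral]
  exact key.mono_left atTop_le_cocompact

theorem averaging_arbitrary_functions (g f : ℝ → ℝ) (T : ℝ) (hT : 0 < T)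
    (hg : Continuous g) (hgp : Function.Periodic g T)
    (hf : Continuous f) (hfi : Integrable f) (hf0 : ∀ x, 0 ≤ f x)
    (hf1 : ∫ x, f x = 1) :
    Filter.Tendsto (fun lam : ℝ => ∫ x, f x * g (lam * x)) Filter.atTop
      (nhds ((1 / T) * ∫ t in (0:ℝ)..T, g t)) :=
  averaging_arbitrary_functions_general g f T hT hg hgp hfi hf1
end
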